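/- Let F : ℝ × [0,∞) → ℝ be C² and let w(x,t) = (1/(2c)) ∫₀ᵗ ∫_{x-c(t-s)}^{x+c(t-s)} F(y,s) dy ds be the solution of the forced wave equation ∂²w/∂t² = c²∂²w/∂x² + F with zero initial data. Then for α > 0, v(x,t) = (2/B(α,1/2)) ∫₀¹ (1-u²)^{α-1} w(x,ut) du satisfies ∂²v/∂t² + (2α/t)∂v/∂t = c²∂²v/∂x² + (2/B(α,1/2)) ∫₀¹ (1-u²)^{α-1} F(x,ut) du for t > 0. -/

import Mathlib

/-!
Write `K_α f (t) = ∫₀¹ (1 - u²)^(α-1) f(u t) du`. Differentiating under the integral,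
`(K_α f)'' + (2α/t) (K_α f)' = K_α (f'')` as soon as `f'(0) = 0`: the term `(2α/t) (K_α f)'`
is turned into `K_α ((1 - u²) f'')` by integrating `d/du [(1 - u²)^α f'(u t)]` over `[0, 1]`,
and `u² + (1 - u²) = 1`. Duhamel's `w` has `∂ₜw(x, 0) = 0` and satisfies `∂ₜ²w = c² ∂ₓ²w + F`,
while `∂ₓ` commutes with `K_α`; apply `K_α` to the wave equation.
-/

open Real intervalIntegral MeasureTheory Set Function

noncomputable def realBeta (a b : ℝ) : ℝ := Real.Gamma a * Real.Gamma b / Real.Gamma (a + b)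

theorem hasDerivAt_integral_mul_of_continuous {g : ℝ → ℝ} {a b : ℝ}
    (hg : IntervalIntegrable g volume a b) {G G' : ℝ → ℝ → ℝ}
    (hG : Continuous (uncurry G)) (hG' : Continuous (uncurry G'))
    (hd : ∀ t s, HasDerivAt (G · s) (G' t s) t) (t₀ : ℝ) :
    HasDerivAt (fun t => ∫ s in a..b, g s * G t s) (∫ s in a..b, g s * G' t₀ s) t₀ := by
  obtain ⟨M, hM⟩ :=
    (isCompact_closedBall t₀ 1 |>.prod isCompact_uIcc).exists_bound_of_continuousOn
      (hG'.continuousOn (s := Metric.closedBall t₀ 1 ×ˢ uIcc a b))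
  have hGs : ∀ t, Continuous (G t) := fun t => hG.comp (Continuous.prodMk_right t)
  have hG's : ∀ t, Continuous (G' t) := fun t => hG'.comp (Continuous.prodMk_right t)
  refine (hasDerivAt_integral_of_dominated_loc_of_deriv_le (F := fun t s => g s * G t s)
    (F' := fun t s => g s * G' t s) (bound := fun s => ‖g s‖ * M)
    (Metric.closedBall_mem_nhds t₀ one_pos) ?_ (hg.mul_continuousOn (hGs t₀).continuousOn)
    (hg.aestronglyMeasurable_restrict_uIoc.mul (hG's t₀).aestronglyMeasurable) ?_
    (hg.norm.mul_const M) ?_).2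
  · exact .of_forall fun t => hg.aestronglyMeasurable_restrict_uIoc.mul (hGs t).aestronglyMeasurable
  · refine .of_forall fun s hs t ht => ?_
    rw [norm_mul]
    exact mul_le_mul_of_nonneg_left (hM (t, s) ⟨ht, uIoc_subset_uIcc hs⟩) (norm_nonneg _)
  · exact .of_forall fun s _ t _ => (hd t s).const_mul (g s)

theorem hasDerivAt_integral_of_continuous {a b : ℝ} {G G' : ℝ → ℝ → ℝ}
    (hG : Continuous (uncurry G)) (hG' : Continuous (uncurry G'))
    (hd : ∀ t s, HasDerivAt (G · s) (G' t s) t) (t₀ : ℝ) :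
    HasDerivAt (fun t => ∫ s in a..b, G t s) (∫ s in a..b, G' t₀ s) t₀ := by
  simpa using hasDerivAt_integral_mul_of_continuous (g := fun _ => 1) intervalIntegrable_const
    hG hG' hd t₀

theorem hasDerivAt_integral_upper_of_continuous {a : ℝ} {G G' : ℝ → ℝ → ℝ}
    (hG : Continuous (uncurry G)) (hG' : Continuous (uncurry G'))
    (hd : ∀ t s, HasDerivAt (G · s) (G' t s) t) (t₀ : ℝ) :
    HasDerivAt (fun t => ∫ s in a..t, G t s) ((∫ s in a..t₀, G' t₀ s) + G t₀ t₀) t₀ := by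
  -- chain rule along the diagonal for `(t, τ) ↦ ∫ s in a..τ, G t s`, whose partials are continuous
  have hpartial_fst : ∀ t τ, HasDerivAt (fun t => ∫ s in a..τ, G t s) (∫ s in a..τ, G' t s) t :=
    fun t _ => hasDerivAt_integral_of_continuous hG hG' hd t
  have hpartial_snd : ∀ t τ, HasDerivAt (fun τ => ∫ s in a..τ, G t s) (G t τ) τ := fun t τ =>
    ((hG.comp (Continuous.prodMk_right t)).integral_hasStrictDerivAt a τ).hasDerivAt
  have hcont_fst : Continuous fun p : ℝ × ℝ => ∫ s in a..p.2, G' p.1 s :=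
    continuous_parametric_primitive_of_continuous hG'
  have hstrict := hasStrictFDerivAt_uncurry_coprod (u := (t₀, t₀))
    (f := fun t τ => ∫ s in a..τ, G t s)
    (f₁ := fun t τ => ContinuousLinearMap.toSpanSingleton ℝ (∫ s in a..τ, G' t s))
    (f₂ := fun t τ => ContinuousLinearMap.toSpanSingleton ℝ (G t τ))
    (.of_forall fun p => hpartial_fst p.1 p.2) (.of_forall fun p => hpartial_snd p.1 p.2)
    ((ContinuousLinearMap.toSpanSingletonCLE (𝕜 := ℝ)).continuous.comp hcont_fst).continuousAt
    ((ContinuousLinearMap.toSpanSingletonCLE (𝕜 := ℝ)).continuous.comp hG).continuousAt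
  have hdiag : HasDerivAt (fun t : ℝ => (t, t)) (1, 1) t₀ :=
    (hasDerivAt_id t₀).prodMk (hasDerivAt_id t₀)
  have h := hstrict.hasFDerivAt.comp_hasDerivAt (f := fun t : ℝ => (t, t)) t₀ hdiag
  exact h.congr_deriv (by simp [Function.HasUncurry.uncurry])

-- Duhamel's solution of the wave equation and its first derivatives are all of this form.
noncomputable def coneIntegral (c e : ℝ) (H : ℝ → ℝ → ℝ) (x t : ℝ) : ℝ :=
  ∫ s in 0..t, (H (x + c * (t - s)) s + e * H (x - c * (t - s)) s)

section coneIntegral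

variable {c e : ℝ} {H H' : ℝ → ℝ → ℝ}

@[simp]
theorem coneIntegral_zero_right (x : ℝ) : coneIntegral c e H x 0 = 0 := by
  simp [coneIntegral]

theorem continuous_coneIntegral (hH : Continuous (uncurry H)) :
    Continuous (uncurry (coneIntegral c e H)) :=
  continuous_parametric_intervalIntegral_of_continuous (by fun_prop) continuous_snd

variable (hH : Continuous (uncurry H)) (hH' : Continuous (uncurry H'))
  (hd : ∀ a s, HasDerivAt (H · s) (H' a s) a)
include hH hH' hd

theorem hasDerivAt_coneIntegral_space (x t : ℝ) :
    HasDerivAt (coneIntegral c e H · t) (coneIntegral c e H' x t) x := by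
  refine hasDerivAt_integral_of_continuous
    (G := fun ρ s => H (ρ + c * (t - s)) s + e * H (ρ - c * (t - s)) s)
    (G' := fun ρ s => H' (ρ + c * (t - s)) s + e * H' (ρ - c * (t - s)) s)
    (by fun_prop) (by fun_prop) (fun ρ s => ?_) x
  exact (hd _ s).comp_add_const.add ((hd _ s).comp_sub_const.const_mul e)

theorem hasDerivAt_coneIntegral_time (x t : ℝ) :
    HasDerivAt (coneIntegral c e H x ·)
      ((1 + e) * H x t + c * coneIntegral c (-e) H' x t) t := by
  have h := hasDerivAt_integral_upper_of_continuous (a := 0)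
    (G := fun τ s => H (x + c * (τ - s)) s + e * H (x - c * (τ - s)) s)
    (G' := fun τ s => c * (H' (x + c * (τ - s)) s + -e * H' (x - c * (τ - s)) s))
    (by fun_prop) (by fun_prop) (fun τ s => ?_) t
  · refine h.congr_deriv ?_
    simp only [coneIntegral, intervalIntegral.integral_const_mul, sub_self, mul_zero, add_zero,
      sub_zero]
    ring
  · have hplus : HasDerivAt (fun τ => x + c * (τ - s)) c τ := by
      simpa using ((hasDerivAt_id τ).sub_const s).const_mul c |>.const_add x
    have hminus : HasDerivAt (fun τ => x - c * (τ - s)) (-c) τ := by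
      simpa using ((hasDerivAt_id τ).sub_const s).const_mul c |>.const_sub x
    exact (((hd _ s).comp τ hplus).add (((hd _ s).comp τ hminus).const_mul e)).congr_deriv
      (by ring)

end coneIntegral

theorem intervalIntegrable_one_sub_sq_rpow {α : ℝ} (hα : 0 < α) :
    IntervalIntegrable (fun u : ℝ => (1 - u ^ 2) ^ (α - 1)) volume 0 1 := by
  have hsing : IntervalIntegrable (fun u : ℝ => (1 - u) ^ (α - 1)) volume 0 1 := by
    simpa using ((intervalIntegrable_rpow' (a := 0) (b := 1) (by linarith)).comp_sub_left 1).symm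
  have hreg : ContinuousOn (fun u : ℝ => (1 + u) ^ (α - 1)) (uIcc 0 1) := by
    refine ContinuousOn.rpow_const (by fun_prop) fun u hu => Or.inl ?_
    rw [uIcc_of_le zero_le_one] at hu
    linarith [hu.1]
  refine (hsing.mul_continuousOn hreg).congr fun u hu => ?_
  rw [uIoc_of_le zero_le_one] at hu
  rw [← mul_rpow (by linarith [hu.2]) (by linarith [hu.1])]
  ring_nf

theorem intervalIntegrable_one_sub_sq_rpow_mul {α : ℝ} (hα : 0 < α) {φ : ℝ → ℝ}
    (hφ : Continuous φ) :
    IntervalIntegrable (fun u : ℝ => (1 - u ^ 2) ^ (α - 1) * φ u) volume 0 1 :=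
  (intervalIntegrable_one_sub_sq_rpow hα).mul_continuousOn hφ.continuousOn

/-- Unnormalised: the operator of the statement is `2 / realBeta α (1 / 2)` times this. -/
noncomputable def erdelyiKober (α : ℝ) (f : ℝ → ℝ) (t : ℝ) : ℝ :=
  ∫ u in 0..1, (1 - u ^ 2) ^ (α - 1) * f (u * t)

section erdelyiKober

variable {α : ℝ}

theorem erdelyiKober_const_mul (k : ℝ) (f : ℝ → ℝ) (t : ℝ) :
    erdelyiKober α (fun s => k * f s) t = k * erdelyiKober α f t := by
  simp only [erdelyiKober, ← intervalIntegral.integral_const_mul]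
  exact integral_congr fun u _ => by ring

variable (hα : 0 < α)
include hα

theorem erdelyiKober_add {f g : ℝ → ℝ} (hf : Continuous f) (hg : Continuous g) (t : ℝ) :
    erdelyiKober α (fun s => f s + g s) t = erdelyiKober α f t + erdelyiKober α g t := by
  simp only [erdelyiKober, mul_add]
  exact integral_add (intervalIntegrable_one_sub_sq_rpow_mul hα (by fun_prop))
    (intervalIntegrable_one_sub_sq_rpow_mul hα (by fun_prop))

theorem hasDerivAt_erdelyiKober_param {h h' : ℝ → ℝ → ℝ} (hh : Continuous (uncurry h))
    (hh' : Continuous (uncurry h')) (hd : ∀ r s, HasDerivAt (h · s) (h' r s) r) (x t : ℝ) :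
    HasDerivAt (fun r => erdelyiKober α (h r) t) (erdelyiKober α (h' x) t) x :=
  hasDerivAt_integral_mul_of_continuous (intervalIntegrable_one_sub_sq_rpow hα)
    (G := fun r u => h r (u * t)) (G' := fun r u => h' r (u * t)) (by fun_prop) (by fun_prop)
    (fun r _ => hd r _) x

theorem hasDerivAt_integral_one_sub_sq_rpow_mul_comp_mul {p f f' : ℝ → ℝ} (hp : Continuous p)
    (hf : ∀ s, HasDerivAt f (f' s) s) (hf' : Continuous f') (t : ℝ) :
    HasDerivAt (fun t => ∫ u in 0..1, (1 - u ^ 2) ^ (α - 1) * (p u * f (u * t)))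
      (∫ u in 0..1, (1 - u ^ 2) ^ (α - 1) * (p u * (u * f' (u * t)))) t := by
  have hfc : Continuous f := continuous_iff_continuousAt.2 fun s => (hf s).continuousAt
  refine hasDerivAt_integral_mul_of_continuous (intervalIntegrable_one_sub_sq_rpow hα)
    (G := fun τ u => p u * f (u * τ)) (G' := fun τ u => p u * (u * f' (u * τ)))
    (by fun_prop) (by fun_prop) (fun τ u => ?_) t
  exact ((hf (u * τ)).comp τ ((hasDerivAt_id τ).const_mul u)).const_mul (p u) |>.congr_deriv
    (by ring)

theorem hasDerivAt_erdelyiKober {f f' : ℝ → ℝ} (hf : ∀ s, HasDerivAt f (f' s) s)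
    (hf' : Continuous f') (t : ℝ) :
    HasDerivAt (erdelyiKober α f)
      (∫ u in 0..1, (1 - u ^ 2) ^ (α - 1) * (u * f' (u * t))) t := by
  change HasDerivAt (fun t => ∫ u in 0..1, (1 - u ^ 2) ^ (α - 1) * f (u * t)) _ t
  simpa using hasDerivAt_integral_one_sub_sq_rpow_mul_comp_mul hα continuous_const hf hf' t
    (p := fun _ => 1)

theorem integral_one_sub_sq_rpow_mul_by_parts {f' f'' : ℝ → ℝ}
    (hf' : ∀ s, HasDerivAt f' (f'' s) s) (hf'' : Continuous f'') (h0 : f' 0 = 0) (t : ℝ) :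
    2 * α * ∫ u in 0..1, (1 - u ^ 2) ^ (α - 1) * (u * f' (u * t))
      = t * ∫ u in 0..1, (1 - u ^ 2) ^ (α - 1) * ((1 - u ^ 2) * f'' (u * t)) := by
  have hf'c : Continuous f' := continuous_iff_continuousAt.2 fun s => (hf' s).continuousAt
  have hderiv : ∀ u ∈ Ioo (0:ℝ) 1, HasDerivAt (fun u => (1 - u ^ 2) ^ α * f' (u * t))
      ((1 - u ^ 2) ^ (α - 1) * (t * ((1 - u ^ 2) * f'' (u * t)) - 2 * α * (u * f' (u * t)))) u := by
    intro u hu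
    have hpos : 0 < 1 - u ^ 2 := by nlinarith [hu.1, hu.2]
    have hweight := ((hasDerivAt_pow 2 u).const_sub 1).rpow_const (p := α) (Or.inl hpos.ne')
    have hcomp := (hf' (u * t)).comp u (hasDerivAt_mul_const t)
    refine (hweight.mul hcomp).congr_deriv ?_
    rw [rpow_sub_one hpos.ne', Function.comp_apply]
    field_simp
    ring
  have hcont : ContinuousOn (fun u => (1 - u ^ 2) ^ α * f' (u * t)) (Icc 0 1) :=
    ((continuous_const.sub (continuous_pow 2)).rpow_const fun _ => Or.inr hα.le).continuousOn.mul
      (by fun_prop)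
  have hA := intervalIntegrable_one_sub_sq_rpow_mul hα (φ := fun u => (1 - u ^ 2) * f'' (u * t))
    (by fun_prop)
  have hB := intervalIntegrable_one_sub_sq_rpow_mul hα (φ := fun u => u * f' (u * t))
    (by fun_prop)
  have hFTC := integral_eq_sub_of_hasDeriv_right_of_le zero_le_one hcont
    (fun u hu => (hderiv u hu).hasDerivWithinAt)
    ((hA.const_mul t).sub (hB.const_mul (2 * α)) |>.congr fun u _ => by ring)
  have hsplit : (∫ u in 0..1,
      (1 - u ^ 2) ^ (α - 1) * (t * ((1 - u ^ 2) * f'' (u * t)) - 2 * α * (u * f' (u * t))))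
      = t * (∫ u in 0..1, (1 - u ^ 2) ^ (α - 1) * ((1 - u ^ 2) * f'' (u * t)))
        - 2 * α * ∫ u in 0..1, (1 - u ^ 2) ^ (α - 1) * (u * f' (u * t)) := by
    rw [← intervalIntegral.integral_const_mul, ← intervalIntegral.integral_const_mul,
      ← intervalIntegral.integral_sub (hA.const_mul t) (hB.const_mul _)]
    exact integral_congr fun u _ => by ring
  simp only [one_pow, sub_self, zero_rpow hα.ne', zero_mul, zero_pow two_ne_zero, sub_zero,
    one_rpow, one_mul, mul_zero, h0] at hFTC
  linarith

theorem erdelyiKober_bessel {f f' f'' : ℝ → ℝ} (hf : ∀ s, HasDerivAt f (f' s) s)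
    (hf' : ∀ s, HasDerivAt f' (f'' s) s) (hf'' : Continuous f'') (h0 : f' 0 = 0) {t : ℝ}
    (ht : 0 < t) :
    deriv (deriv (erdelyiKober α f)) t + 2 * α / t * deriv (erdelyiKober α f) t
      = erdelyiKober α f'' t := by
  have hf'c : Continuous f' := continuous_iff_continuousAt.2 fun s => (hf' s).continuousAt
  have hderiv : deriv (erdelyiKober α f)
      = fun t => ∫ u in 0..1, (1 - u ^ 2) ^ (α - 1) * (u * f' (u * t)) :=
    funext fun t => (hasDerivAt_erdelyiKober hα hf hf'c t).deriv
  have hparts := integral_one_sub_sq_rpow_mul_by_parts hα hf' hf'' h0 t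
  rw [hderiv, (hasDerivAt_integral_one_sub_sq_rpow_mul_comp_mul hα (p := fun u => u)
    continuous_id' hf' hf'' t).deriv, div_mul_eq_mul_div, hparts, mul_div_cancel_left₀ _ ht.ne',
    erdelyiKober, ← intervalIntegral.integral_add
      (intervalIntegrable_one_sub_sq_rpow_mul hα (by fun_prop))
      (intervalIntegrable_one_sub_sq_rpow_mul hα (by fun_prop))]
  exact integral_congr fun u _ => by ring

end erdelyiKober

noncomputable def spacePrimitive (F : ℝ → ℝ → ℝ) (a s : ℝ) : ℝ :=
  ∫ y in 0..a, F y s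

noncomputable def waveDuhamel (c : ℝ) (F : ℝ → ℝ → ℝ) (x t : ℝ) : ℝ :=
  1 / (2 * c) * ∫ s in (0:ℝ)..t, ∫ y in (x - c * (t - s))..(x + c * (t - s)), F y s

noncomputable def waveDuhamelDt (c : ℝ) (F : ℝ → ℝ → ℝ) (x t : ℝ) : ℝ :=
  coneIntegral c 1 F x t / 2

noncomputable def waveDuhamelDx (c : ℝ) (F : ℝ → ℝ → ℝ) (x t : ℝ) : ℝ :=
  coneIntegral c (-1) F x t / (2 * c)

section waveDuhamel

variable {c : ℝ} {F F₁ : ℝ → ℝ → ℝ} (hF : Continuous (uncurry F))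
include hF

theorem continuous_spacePrimitive : Continuous (uncurry (spacePrimitive F)) :=
  continuous_parametric_intervalIntegral_of_continuous (by fun_prop) continuous_fst

theorem hasDerivAt_spacePrimitive (a s : ℝ) : HasDerivAt (spacePrimitive F · s) (F a s) a :=
  ((hF.comp (Continuous.prodMk_left s)).integral_hasStrictDerivAt 0 a).hasDerivAt

theorem waveDuhamel_eq_coneIntegral :
    waveDuhamel c F = fun x t => coneIntegral c (-1) (spacePrimitive F) x t / (2 * c) := by
  funext x t
  rw [waveDuhamel, coneIntegral, one_div_mul_eq_div]
  congr 1
  refine integral_congr fun s _ => ?_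
  have hFs : Continuous (F · s) := hF.comp (Continuous.prodMk_left s)
  rw [spacePrimitive, spacePrimitive, ← integral_interval_sub_left (hFs.intervalIntegrable _ _)
    (hFs.intervalIntegrable _ _)]
  ring

theorem continuous_waveDuhamel : Continuous (uncurry (waveDuhamel c F)) := by
  rw [waveDuhamel_eq_coneIntegral hF]
  exact (continuous_coneIntegral (continuous_spacePrimitive hF)).div_const _

theorem continuous_waveDuhamelDx : Continuous (uncurry (waveDuhamelDx c F)) :=
  (continuous_coneIntegral hF).div_const _

theorem hasDerivAt_waveDuhamel_space (x t : ℝ) :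
    HasDerivAt (waveDuhamel c F · t) (waveDuhamelDx c F x t) x := by
  rw [waveDuhamel_eq_coneIntegral hF]
  exact (hasDerivAt_coneIntegral_space (continuous_spacePrimitive hF) hF
    (hasDerivAt_spacePrimitive hF) x t).div_const _

theorem hasDerivAt_waveDuhamel_time (hc : c ≠ 0) (x t : ℝ) :
    HasDerivAt (waveDuhamel c F x ·) (waveDuhamelDt c F x t) t := by
  rw [waveDuhamel_eq_coneIntegral hF]
  refine ((hasDerivAt_coneIntegral_time (continuous_spacePrimitive hF) hF
    (hasDerivAt_spacePrimitive hF) x t).div_const (2 * c)).congr_deriv ?_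
  rw [waveDuhamelDt, neg_neg]
  field_simp
  ring

variable (hF₁ : Continuous (uncurry F₁)) (hd : ∀ a s, HasDerivAt (F · s) (F₁ a s) a)
include hF₁ hd

theorem hasDerivAt_waveDuhamelDx_space (x t : ℝ) :
    HasDerivAt (waveDuhamelDx c F · t) (waveDuhamelDx c F₁ x t) x :=
  (hasDerivAt_coneIntegral_space hF hF₁ hd x t).div_const _

theorem hasDerivAt_waveDuhamelDt_time (x t : ℝ) :
    HasDerivAt (waveDuhamelDt c F x ·) (F x t + c ^ 2 * waveDuhamelDx c F₁ x t) t := by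
  refine ((hasDerivAt_coneIntegral_time hF hF₁ hd x t).div_const 2).congr_deriv ?_
  rw [waveDuhamelDx]
  field_simp
  ring

end waveDuhamel

theorem exists_hasDerivAt_fst_of_contDiff {F : ℝ → ℝ → ℝ} (hF : ContDiff ℝ 1 (uncurry F)) :
    ∃ F₁ : ℝ → ℝ → ℝ, Continuous (uncurry F₁) ∧ ∀ a s, HasDerivAt (F · s) (F₁ a s) a :=
  ⟨fun a s => fderiv ℝ (uncurry F) (a, s) (1, 0),
    (hF.continuous_fderiv one_ne_zero).clm_apply continuous_const,
    fun a s => ((hF.differentiable one_ne_zero (a, s)).hasFDerivAt.comp_hasDerivAt a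
      ((hasDerivAt_id' a).prodMk (hasDerivAt_const a s)) :)⟩

/-- the Erdélyi–Kober average of the solution of the forced wave equation with
zero initial data solves a non-homogeneous Euler–Poisson–Darboux equation. -/
theorem erdelyiKober_forced_wave_solves_EPD (α c : ℝ) (hα : 0 < α) (hc : 0 < c)
    (F : ℝ → ℝ → ℝ) (hF : ContDiff ℝ 2 (fun p : ℝ × ℝ => F p.1 p.2))
    (w : ℝ → ℝ → ℝ)
    (hw : ∀ x t, w x t =
      1 / (2 * c) * ∫ s in (0:ℝ)..t, ∫ y in (x - c * (t - s))..(x + c * (t - s)), F y s)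
    (v : ℝ → ℝ → ℝ)
    (hv : ∀ x t, v x t =
      2 / realBeta α (1 / 2) * ∫ u in (0:ℝ)..1, (1 - u ^ 2) ^ (α - 1) * w x (u * t)) :
    ∀ x t, 0 < t →
      deriv (fun s => deriv (fun r => v x r) s) t + (2 * α / t) * deriv (fun r => v x r) t
        = c ^ 2 * deriv (fun s => deriv (fun r => v r t) s) x
          + 2 / realBeta α (1 / 2) * ∫ u in (0:ℝ)..1, (1 - u ^ 2) ^ (α - 1) * F x (u * t) := by
  intro x t ht
  have hFc : Continuous (uncurry F) := hF.continuous
  obtain ⟨F₁, hF₁c, hF₁⟩ := exists_hasDerivAt_fst_of_contDiff (hF.of_le one_le_two)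
  obtain rfl : w = waveDuhamel c F := funext₂ hw
  obtain rfl : v = fun x t => 2 / realBeta α (1 / 2) * erdelyiKober α (waveDuhamel c F x) t :=
    funext₂ hv
  have hspace (r : ℝ) := hasDerivAt_erdelyiKober_param hα (continuous_waveDuhamel hFc)
    (continuous_waveDuhamelDx hFc) (hasDerivAt_waveDuhamel_space (c := c) hFc) r t
  have hspace₂ := hasDerivAt_erdelyiKober_param hα (continuous_waveDuhamelDx hFc)
    (continuous_waveDuhamelDx hF₁c) (hasDerivAt_waveDuhamelDx_space (c := c) hFc hF₁c hF₁) x t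
  have hWxx := continuous_waveDuhamelDx (c := c) hF₁c
  have htime := erdelyiKober_bessel hα (hasDerivAt_waveDuhamel_time hFc hc.ne' x)
    (hasDerivAt_waveDuhamelDt_time hFc hF₁c hF₁ x) (by fun_prop)
    (by simp [waveDuhamelDt]) ht
  simp only [deriv_const_mul_field', funext fun r => (hspace r).deriv, (hspace₂.const_mul _).deriv]
  rw [erdelyiKober_add hα (by fun_prop) (by fun_prop), erdelyiKober_const_mul] at htime
  change _ = _ + _ * erdelyiKober α (F x) t
  linear_combination 2 / realBeta α (1 / 2) * htime
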